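/- Consider the pentagonal star spin system of N = 6 spins with coupling constant J > 0: spins 0,…,4 occupy the vertices of a pentagon with edges {μ, μ+1 mod 5}, and spin 5 (the center) is joined to each of the five pentagon vertices; the energy is H₀(s) = 2J (∑_{μ=0}^{4} ⟨s_μ, s_{μ+1 mod 5}⟩ + ∑_{μ=0}^{4} ⟨s_μ, s_5⟩). Then the minimal energy over all states equals −(5 + 2√5)·J: every state s satisfies H₀(s) ≥ −(5 + 2√5)·J, and there is a (non-coplanar) state attaining this value. -/

import Mathlib

/-!
Write `T` for the sum of the five pentagon spins and `e` for the sum of their inner products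
along the pentagon edges. The centre spin contributes at least `-‖T‖`. Expanding
`‖T‖² = 5 + 2e + 2p` (`p` the diagonal sum) and bounding `p` by `e` through the nonnegativity of
the Fourier mode `‖∑ ωᵏ sₖ‖²`, `ω = exp (2πi/5)`, gives `‖T‖² ≤ 5√5 + (5 - √5) e`; minimising
`e - ‖T‖` under this constraint yields `-(5 + 2√5)/2`. Equality holds for the umbrella state:
pentagon spins on a cone around the reversed centre spin, consecutive ones `4π/5` apart in azimuth.
-/

open scoped RealInnerProductSpace

/-- The energy of the pentagonal star spin system with coupling `J`: spins
`0,…,4` form a pentagon (edges `{μ, μ+1 mod 5}`) and spin `5` is the center,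
joined to all five pentagon vertices. -/
noncomputable def pentStarEnergy (J : ℝ) (s : Fin 6 → EuclideanSpace ℝ (Fin 3)) : ℝ :=
  2 * J * ((∑ μ : Fin 5, ⟪s μ.castSucc, s (μ + 1).castSucc⟫) +
    ∑ μ : Fin 5, ⟪s μ.castSucc, s 5⟫)

open Real

section CyclicCorrelation

variable {F : Type*} [NormedAddCommGroup F] [InnerProductSpace ℝ F]

def cyclicCorrelation {n : ℕ} (v : Fin n → F) (d : Fin n) : ℝ :=
  ∑ k, ⟪v k, v (k + d)⟫

variable (v : Fin 5 → F)

lemma norm_sum_fin_five_sq :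
    ‖∑ k, v k‖ ^ 2 =
      ∑ k, ‖v k‖ ^ 2 + 2 * (cyclicCorrelation v 1 + cyclicCorrelation v 2) := by
  simp only [cyclicCorrelation, Fin.sum_univ_five, Fin.reduceAdd, ← real_inner_self_eq_norm_sq,
    inner_add_left, inner_add_right, real_inner_comm (v 0), real_inner_comm (v 1) (v 2),
    real_inner_comm (v 1) (v 3), real_inner_comm (v 1) (v 4), real_inner_comm (v 2) (v 3),
    real_inner_comm (v 2) (v 4), real_inner_comm (v 3) (v 4)]
  ring

/-- `2‖∑ ωᵏ vₖ‖² ≥ 0` for `ω = exp (2πi/5)`, using `2 cos (2π/5) = (√5 - 1)/2` and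
`2 cos (4π/5) = -(√5 + 1)/2`. -/
lemma cyclicCorrelation_fin_five_fourier_nonneg :
    0 ≤ 2 * ∑ k, ‖v k‖ ^ 2 + (√5 - 1) * cyclicCorrelation v 1
      - (√5 + 1) * cyclicCorrelation v 2 := by
  have hr : √5 ^ 2 = 5 := sq_sqrt (by norm_num)
  -- the two squares are the real part and a rescaled imaginary part of `∑ ωᵏ vₖ`
  have key : 2 * ∑ k, ‖v k‖ ^ 2 + (√5 - 1) * cyclicCorrelation v 1
      - (√5 + 1) * cyclicCorrelation v 2 =
      2 * ‖v 0 + ((√5 - 1) / 4) • (v 1 + v 4) - ((√5 + 1) / 4) • (v 2 + v 3)‖ ^ 2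
      + (10 + 2 * √5) / 8 * ‖v 1 - v 4 + ((√5 - 1) / 2) • (v 2 - v 3)‖ ^ 2 := by
    simp only [cyclicCorrelation, Fin.sum_univ_five, Fin.reduceAdd, ← real_inner_self_eq_norm_sq,
      inner_add_left, inner_add_right, inner_sub_left, inner_sub_right, real_inner_smul_left,
      real_inner_smul_right, real_inner_comm (v 0), real_inner_comm (v 1) (v 2),
      real_inner_comm (v 1) (v 3), real_inner_comm (v 1) (v 4), real_inner_comm (v 2) (v 3),
      real_inner_comm (v 2) (v 4), real_inner_comm (v 3) (v 4)]
    linear_combination (-(⟪v 1, v 1⟫ + ⟪v 4, v 4⟫) / 8 - (√5 + 5) / 16 * (⟪v 2, v 2⟫ + ⟪v 3, v 3⟫)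
      + (√5 + 1) / 8 * ⟪v 2, v 3⟫ + (⟪v 1, v 3⟫ + ⟪v 2, v 4⟫) / 2 - ⟪v 1, v 4⟫ / 4) * hr
  rw [key]
  positivity

variable {v}

lemma norm_sum_fin_five_sq_le (hv : ∀ k, ‖v k‖ = 1) :
    ‖∑ k, v k‖ ^ 2 ≤ 5 * √5 + (5 - √5) * cyclicCorrelation v 1 := by
  have hr : √5 ^ 2 = 5 := sq_sqrt (by norm_num)
  have hr1 : 1 ≤ √5 := one_le_sqrt.2 (by norm_num)
  have hunit : ∑ k, ‖v k‖ ^ 2 = 5 := by simp [hv]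
  have hfourier := cyclicCorrelation_fin_five_fourier_nonneg v
  rw [hunit] at hfourier
  rw [norm_sum_fin_five_sq, hunit]
  linear_combination (√5 - 1) / 2 * hfourier
    + (cyclicCorrelation v 1 - cyclicCorrelation v 2) / 2 * hr

lemma neg_five_add_two_sqrt_five_div_two_le (hv : ∀ k, ‖v k‖ = 1) {u : F} (hu : ‖u‖ = 1) :
    -((5 + 2 * √5) / 2) ≤ cyclicCorrelation v 1 + ⟪∑ k, v k, u⟫ := by
  have hr : √5 ^ 2 = 5 := sq_sqrt (by norm_num)
  have hr3 : √5 < 3 := by nlinarith [sqrt_nonneg 5]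
  have hcenter : -‖∑ k, v k‖ ≤ ⟪∑ k, v k, u⟫ := by
    simpa [hu] using neg_le_of_abs_le (abs_real_inner_le_norm (∑ k, v k) u)
  have hsum := norm_sum_fin_five_sq_le hv
  -- minimise `e - t` subject to `t² ≤ 5√5 + (5 - √5) e`; the optimum is `t = (5 - √5)/2`
  nlinarith [sq_nonneg (2 * ‖∑ k, v k‖ - (5 - √5)), norm_nonneg (∑ k, v k)]

end CyclicCorrelation

lemma pentStarEnergy_eq_cyclicCorrelation_add_inner (J : ℝ)
    (s : Fin 6 → EuclideanSpace ℝ (Fin 3)) :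
    pentStarEnergy J s = 2 * J * (cyclicCorrelation (fun μ : Fin 5 => s μ.castSucc) 1
      + ⟪∑ μ : Fin 5, s μ.castSucc, s 5⟫) := by
  rw [pentStarEnergy, sum_inner]
  rfl

lemma EuclideanSpace.inner_fin_three (x y : EuclideanSpace ℝ (Fin 3)) :
    ⟪x, y⟫ = x 0 * y 0 + x 1 * y 1 + x 2 * y 2 := by
  simp [PiLp.inner_apply, Fin.sum_univ_three, mul_comm]

noncomputable def coneSpin (ρ z θ : ℝ) : EuclideanSpace ℝ (Fin 3) :=
  !₂[ρ * cos θ, ρ * sin θ, z]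

lemma inner_coneSpin (ρ z a b : ℝ) :
    ⟪coneSpin ρ z a, coneSpin ρ z b⟫ = ρ ^ 2 * cos (a - b) + z ^ 2 := by
  simp [coneSpin, EuclideanSpace.inner_fin_three, cos_sub]
  ring

lemma norm_coneSpin {ρ z : ℝ} (h : ρ ^ 2 + z ^ 2 = 1) (θ : ℝ) : ‖coneSpin ρ z θ‖ = 1 := by
  rw [norm_eq_sqrt_real_inner, inner_coneSpin, sub_self, cos_zero, mul_one, h, sqrt_one]

lemma cos_four_pi_div_five : cos (4 * π / 5) = -(1 + √5) / 4 := by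
  rw [show 4 * π / 5 = π - π / 5 by ring, cos_pi_sub, cos_pi_div_five, neg_div]

lemma cos_pentagram_step (k : Fin 5) :
    cos (4 * π / 5 * (k : ℕ) - 4 * π / 5 * ((k + 1 : Fin 5) : ℕ)) = cos (4 * π / 5) := by
  fin_cases k <;> simp
  · rw [← cos_neg]; ring_nf
  · rw [← cos_neg]; ring_nf
  · rw [← cos_neg]; ring_nf
  · rw [show 4 * π / 5 * 4 = (2 : ℕ) * (2 * π) - 4 * π / 5 by push_cast; ring,
      cos_nat_mul_two_pi_sub]

noncomputable def coneState (ρ z : ℝ) : Fin 6 → EuclideanSpace ℝ (Fin 3) :=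
  Fin.snoc (α := fun _ => EuclideanSpace ℝ (Fin 3))
    (fun k : Fin 5 => coneSpin ρ z (4 * π / 5 * (k : ℕ))) !₂[0, 0, -1]

lemma coneState_castSucc (ρ z : ℝ) (k : Fin 5) :
    coneState ρ z k.castSucc = coneSpin ρ z (4 * π / 5 * (k : ℕ)) :=
  Fin.snoc_castSucc ..

lemma coneState_five (ρ z : ℝ) : coneState ρ z 5 = !₂[0, 0, -1] :=
  Fin.snoc_last ..

lemma norm_coneState {ρ z : ℝ} (h : ρ ^ 2 + z ^ 2 = 1) (μ : Fin 6) : ‖coneState ρ z μ‖ = 1 := by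
  induction μ using Fin.lastCases with
  | last => simp [coneState_five, EuclideanSpace.norm_eq, Fin.sum_univ_three]
  | cast k => rw [coneState_castSucc, norm_coneSpin h]

lemma pentStarEnergy_coneState (J ρ z : ℝ) :
    pentStarEnergy J (coneState ρ z) = 10 * J * (ρ ^ 2 * cos (4 * π / 5) + z ^ 2 - z) := by
  have hcenter (θ : ℝ) : ⟪coneSpin ρ z θ, !₂[0, 0, -1]⟫ = -z := by
    simp [coneSpin, EuclideanSpace.inner_fin_three]
  simp only [pentStarEnergy, coneState_castSucc, coneState_five, inner_coneSpin,
    cos_pentagram_step, hcenter, Finset.sum_const, Finset.card_univ, Fintype.card_fin]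
  ring

lemma coneState_not_coplanar {ρ : ℝ} (hρ : ρ ≠ 0) (z : ℝ) :
    ¬ ∃ n : EuclideanSpace ℝ (Fin 3), n ≠ 0 ∧ ∀ μ, ⟪n, coneState ρ z μ⟫ = 0 := by
  rintro ⟨n, hn, hperp⟩
  have h5 := hperp 5
  have h0 := hperp (Fin.castSucc 0)
  have h1 := hperp (Fin.castSucc 1)
  rw [coneState_five] at h5
  rw [coneState_castSucc] at h0 h1
  simp only [coneSpin, Fin.isValue, Fin.coe_ofNat_eq_mod, Nat.zero_mod, CharP.cast_eq_zero,
    mul_zero, cos_zero, mul_one, sin_zero, EuclideanSpace.inner_fin_three, Matrix.cons_val_zero,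
    Matrix.cons_val_one, add_zero, Matrix.cons_val, Nat.one_mod, Nat.cast_one, mul_neg, zero_add,
    neg_eq_zero] at h0 h1 h5
  have hsin : sin (4 * π / 5) ≠ 0 :=
    (sin_pos_of_pos_of_lt_pi (by positivity) (by linarith [pi_pos])).ne'
  have hn2 : n 2 = 0 := by linarith
  have hn0 : n 0 = 0 := by simpa [hn2, hρ] using h0
  have hn1 : n 1 = 0 := by simpa [hn0, hn2, hρ, hsin] using h1
  exact hn (by ext i; fin_cases i <;> assumption)

theorem pentagonal_star_ground_state_energy (J : ℝ) (hJ : 0 < J) :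
    (∀ s : Fin 6 → EuclideanSpace ℝ (Fin 3), (∀ μ, ‖s μ‖ = 1) →
      -((5 + 2 * Real.sqrt 5) * J) ≤ pentStarEnergy J s) ∧
    ∃ s : Fin 6 → EuclideanSpace ℝ (Fin 3), (∀ μ, ‖s μ‖ = 1) ∧
      (¬ ∃ n : EuclideanSpace ℝ (Fin 3), n ≠ 0 ∧ ∀ μ, ⟪n, s μ⟫ = 0) ∧
      pentStarEnergy J s = -((5 + 2 * Real.sqrt 5) * J) := by
  have hr : √5 ^ 2 = 5 := sq_sqrt (by norm_num)
  -- `z` minimises `z ^ 2 - z + (1 - z ^ 2) * cos (4 * π / 5)`, the energy per pentagon spin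
  set ρ := √((7 + √5) / 10)
  set z := (5 - √5) / 10
  have hρ : ρ ^ 2 = (7 + √5) / 10 := sq_sqrt (by positivity)
  have hunit : ρ ^ 2 + z ^ 2 = 1 := by rw [hρ]; linear_combination hr / 100
  refine ⟨fun s hs => ?_, coneState ρ z, norm_coneState hunit,
    coneState_not_coplanar (by positivity) z, ?_⟩
  · calc -((5 + 2 * √5) * J) = 2 * J * -((5 + 2 * √5) / 2) := by ring
      _ ≤ _ := by
        gcongr
        exact neg_five_add_two_sqrt_five_div_two_le (fun μ => hs μ.castSucc) (hs 5)
      _ = pentStarEnergy J s := (pentStarEnergy_eq_cyclicCorrelation_add_inner J s).symm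
  · rw [pentStarEnergy_coneState, hρ, cos_four_pi_div_five]
    linear_combination -3 * J / 20 * hr
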